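/- arXiv:1408.4980 — 2 statements merged into one kernel-verified Lean document; each statement's English description precedes it below -/
import Mathlib

section
/- Let e : {1,...,F} × {1,...,N} → {-1,+1} and j ≥ 1. Suppose F > Σ_{ℓ=1}^{j} C(j,ℓ) · Φ_ℓ, where Φ_ℓ is any upper bound on |Σ_{k=1}^{F} e(k,n_{i_1})···e(k,n_{i_ℓ})| over all choices of ℓ distinct positions n_{i_1},...,n_{i_ℓ}. Then for every choice of positions 1 ≤ n_1 < ... < n_j ≤ N and signs ε_1,...,ε_j ∈ {-1,+1}, there exists k ∈ {1,...,F} with e(k,n_i) = ε_i for all i = 1,...,j. -/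
/-!
Fix the positions `n` and the signs `ε`. For every sequence `k`, the product
`∏ᵢ (1 + εᵢ e(k, nᵢ))` is `2^j` if `k` realizes the pattern and `0` otherwise. Expanding the
product and summing over `k`, the empty subset contributes `F` and a nonempty subset `t` of
size `ℓ` contributes `± (an order-ℓ correlation sum)`, of absolute value at most `Φ ℓ`. If no
sequence realized the pattern the total would be `0`, forcing `F ≤ Σ_ℓ C(j,ℓ) Φ ℓ`.
-/

open Finset

lemma one_add_mul_eq_zero_of_ne {a b : ℤ} (ha : a = 1 ∨ a = -1) (hb : b = 1 ∨ b = -1)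
    (hab : a ≠ b) : 1 + (a : ℝ) * b = 0 := by
  rcases ha with rfl | rfl <;> rcases hb with rfl | rfl <;> norm_num at *

lemma sum_prod_one_add_eq_card_add {ι κ R : Type*} [Fintype ι] [Fintype κ] [DecidableEq κ]
    [CommSemiring R] (x : ι → κ → R) :
    ∑ k, ∏ i, (1 + x k i) =
      Fintype.card ι + ∑ t ∈ (univ : Finset κ).powerset.erase ∅, ∑ k, ∏ i ∈ t, x k i := by
  simp_rw [prod_one_add]
  rw [sum_comm, ← add_sum_erase _ _ (empty_mem_powerset _)]
  simp

lemma sum_powerset_erase_empty_apply_card {α M : Type*} [AddCancelCommMonoid M] [DecidableEq α]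
    (s : Finset α) (f : ℕ → M) :
    ∑ t ∈ s.powerset.erase ∅, f t.card = ∑ ℓ ∈ Icc 1 s.card, s.card.choose ℓ • f ℓ := by
  have hIcc : Icc 1 s.card = (range (s.card + 1)).erase 0 := by
    ext ℓ; simp; omega
  have h := sum_powerset_apply_card f (x := s)
  rw [← add_sum_erase _ _ (empty_mem_powerset s),
    ← add_sum_erase _ _ (mem_range.2 s.card.succ_pos)] at h
  simp only [card_empty, Nat.choose_zero_right, one_smul] at h
  rw [hIcc]
  exact add_left_cancel h

lemma abs_sum_prod_comp_le {ι α β : Type*} [Fintype ι] (f : ι → α → ℝ) {n : β → α}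
    (hn : Function.Injective n) (t : Finset β) {c : ℝ}
    (h : ∀ s : Fin t.card → α, Function.Injective s → |∑ k, ∏ i, f k (s i)| ≤ c) :
    |∑ k, ∏ i ∈ t, f k (n i)| ≤ c := by
  have hinj : Function.Injective fun i => n (t.equivFin.symm i) :=
    hn.comp (Subtype.val_injective.comp t.equivFin.symm.injective)
  convert h _ hinj using 4 with k
  rw [← prod_coe_sort]
  exact (t.equivFin.symm.prod_comp fun i : t => f k (n i)).symm

lemma abs_sum_prod_sign_mul_eq {ι β : Type*} [Fintype ι] (x : ι → β → ℝ) (ε : β → ℤ)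
    (hε : ∀ i, ε i = 1 ∨ ε i = -1) (t : Finset β) :
    |∑ k, ∏ i ∈ t, ((ε i : ℝ) * x k i)| = |∑ k, ∏ i ∈ t, x k i| := by
  have hsign : |∏ i ∈ t, (ε i : ℝ)| = 1 := by
    rw [abs_prod]
    exact prod_eq_one fun i _ => by rcases hε i with h | h <;> simp [h]
  simp_rw [prod_mul_distrib, ← mul_sum, abs_mul, hsign, one_mul]

theorem stmt3_general (F N j : ℕ) (e : Fin F → Fin N → ℤ)
    (he : ∀ k n, e k n = 1 ∨ e k n = -1)
    (Φ : ℕ → ℝ)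
    (hΦ : ∀ ℓ, 1 ≤ ℓ → ℓ ≤ j → ∀ s : Fin ℓ → Fin N, Function.Injective s →
      |∑ k : Fin F, ∏ i : Fin ℓ, (e k (s i) : ℝ)| ≤ Φ ℓ)
    (hF : (F : ℝ) > ∑ ℓ ∈ Finset.Icc 1 j, (j.choose ℓ : ℝ) * Φ ℓ) :
    ∀ n : Fin j → Fin N, StrictMono n →
      ∀ ε : Fin j → ℤ, (∀ i, ε i = 1 ∨ ε i = -1) →
        ∃ k : Fin F, ∀ i, e k (n i) = ε i := by
  intro n hn ε hε
  by_contra! hnone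
  set T := (univ : Finset (Fin j)).powerset.erase ∅
  have hzero : ∑ k, ∏ i, (1 + (ε i : ℝ) * e k (n i)) = 0 :=
    sum_eq_zero fun k _ =>
      have ⟨i, hi⟩ := hnone k
      prod_eq_zero (mem_univ i) (one_add_mul_eq_zero_of_ne (hε i) (he k (n i)) (Ne.symm hi))
  rw [sum_prod_one_add_eq_card_add, Fintype.card_fin] at hzero
  have hbound : ∀ t ∈ T, |∑ k, ∏ i ∈ t, (ε i : ℝ) * e k (n i)| ≤ Φ t.card := by
    intro t ht
    rw [abs_sum_prod_sign_mul_eq _ ε hε]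
    refine abs_sum_prod_comp_le (fun k a => (e k a : ℝ)) hn.injective t (hΦ t.card ?_ ?_)
    · exact card_pos.2 (nonempty_iff_ne_empty.2 (ne_of_mem_erase ht))
    · exact card_le_univ t |>.trans_eq (Fintype.card_fin j)
  have hle : (F : ℝ) ≤ ∑ t ∈ T, Φ t.card := calc
    (F : ℝ) ≤ |∑ t ∈ T, ∑ k, ∏ i ∈ t, (ε i : ℝ) * e k (n i)| :=
      (eq_neg_of_add_eq_zero_left hzero).trans_le (neg_le_abs _)
    _ ≤ ∑ t ∈ T, |∑ k, ∏ i ∈ t, (ε i : ℝ) * e k (n i)| := abs_sum_le_sum_abs _ _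
    _ ≤ ∑ t ∈ T, Φ t.card := sum_le_sum hbound
  rw [sum_powerset_erase_empty_apply_card, card_univ, Fintype.card_fin] at hle
  simp only [nsmul_eq_mul] at hle
  exact hF.not_ge hle

/-- If `F > Σ_{ℓ=1}^{j} C(j,ℓ) Φ_ℓ`, where `Φ_ℓ` bounds all order-`ℓ` correlation sums of the
columns, then every sign pattern on `j` positions is realized by some sequence. -/
theorem stmt3 (F N j : ℕ) (hj : 1 ≤ j) (e : Fin F → Fin N → ℤ)
    (he : ∀ k n, e k n = 1 ∨ e k n = -1)
    (Φ : ℕ → ℝ)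
    (hΦ : ∀ ℓ, 1 ≤ ℓ → ℓ ≤ j → ∀ s : Fin ℓ → Fin N, Function.Injective s →
      |∑ k : Fin F, ∏ i : Fin ℓ, (e k (s i) : ℝ)| ≤ Φ ℓ)
    (hF : (F : ℝ) > ∑ ℓ ∈ Finset.Icc 1 j, (j.choose ℓ : ℝ) * Φ ℓ) :
    ∀ n : Fin j → Fin N, StrictMono n →
      ∀ ε : Fin j → ℤ, (∀ i, ε i = 1 ∨ ε i = -1) →
        ∃ k : Fin F, ∀ i, e k (n i) = ε i :=
  stmt3_general F N j e he Φ hΦ hF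
end

section
/- Let p ≥ 11 be a prime and b a quadratic nonresidue modulo p. Then the (p−1)/2 binary sequences E_n = (((n² − b i²)/p))_{i=1}^{(p−1)/2}, for n = 1,...,(p−1)/2, are pairwise distinct; that is, for 1 ≤ n_1 < n_2 ≤ (p−1)/2 there exists i with 1 ≤ i ≤ (p−1)/2 and ((n_1² − b i²)/p) ≠ ((n_2² − b i²)/p). -/
open Finset

section Aux

variable {F : Type*} [Field F] [Fintype F] [DecidableEq F]

/-- Sum of `χ(x-r)·χ(x-s)` over a finite field is `-1` when `r ≠ s`. -/
lemma aux_quadChar_shift_sum (hF : ringChar F ≠ 2) {r s : F} (hrs : r ≠ s) :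
    ∑ x : F, quadraticChar F (x - r) * quadraticChar F (x - s) = -1 := by
  have hd : s - r ≠ 0 := sub_ne_zero.mpr (Ne.symm hrs)
  have h1 : ∑ x : F, quadraticChar F (x - r) * quadraticChar F (x - s)
      = ∑ y : F, quadraticChar F y * quadraticChar F (y - (s - r)) := by
    refine Fintype.sum_equiv (Equiv.subRight r) _ _ fun x => ?_
    simp only [Equiv.subRight_apply]
    congr 2
    ring
  have h2 : ∑ y : F, quadraticChar F y * quadraticChar F (y - (s - r))
      = ∑ z : F, quadraticChar F ((s - r) * z)
          * quadraticChar F ((s - r) * z - (s - r)) :=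
    (Fintype.sum_equiv (Equiv.mulLeft₀ (s - r) hd) _ _ fun z => rfl).symm
  have h3 : ∀ z : F, quadraticChar F ((s - r) * z)
      * quadraticChar F ((s - r) * z - (s - r))
      = quadraticChar F (s - r) ^ 2 * (quadraticChar F z * quadraticChar F (z - 1)) := by
    intro z
    have e : (s - r) * z - (s - r) = (s - r) * (z - 1) := by ring
    rw [e, map_mul, map_mul]
    ring
  have hsq : quadraticChar F (s - r) ^ 2 = 1 := quadraticChar_sq_one hd
  have h4 : ∀ z : F, quadraticChar F (z - 1)
      = quadraticChar F (-1) * quadraticChar F (1 - z) := by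
    intro z
    have e : z - 1 = -1 * (1 - z) := by ring
    rw [e, map_mul]
  have hJ : jacobiSum (quadraticChar F) (quadraticChar F)
      = -(quadraticChar F) (-1) := by
    have h := jacobiSum_nontrivial_inv (quadraticChar_ne_one hF)
    rwa [(quadraticChar_isQuadratic F).inv] at h
  have hneg : quadraticChar F (-1) * quadraticChar F (-1) = 1 := by
    rw [← map_mul]
    norm_num
  calc ∑ x : F, quadraticChar F (x - r) * quadraticChar F (x - s)
      = ∑ z : F, quadraticChar F (s - r) ^ 2
          * (quadraticChar F z * quadraticChar F (z - 1)) := by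
        rw [h1, h2]; exact Finset.sum_congr rfl fun z _ => h3 z
    _ = ∑ z : F, quadraticChar F z * quadraticChar F (z - 1) := by
        simp only [hsq, one_mul]
    _ = ∑ z : F, quadraticChar F (-1)
          * (quadraticChar F z * quadraticChar F (1 - z)) := by
        refine Finset.sum_congr rfl fun z _ => ?_
        rw [h4 z]; ring
    _ = quadraticChar F (-1) * jacobiSum (quadraticChar F) (quadraticChar F) := by
        rw [← Finset.mul_sum]; rfl
    _ = -1 := by rw [hJ, mul_neg, hneg]

end Aux

theorem stmt9 (p : ℕ) [Fact p.Prime] (hp : 11 ≤ p) (b : ℤ) (hb : legendreSym p b = -1)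
    (n₁ n₂ : ℕ) (h1 : 1 ≤ n₁) (h12 : n₁ < n₂) (h2 : n₂ ≤ (p - 1) / 2) :
    ∃ i : ℕ, 1 ≤ i ∧ i ≤ (p - 1) / 2 ∧
      legendreSym p ((n₁ : ℤ) ^ 2 - b * (i : ℤ) ^ 2)
        ≠ legendreSym p ((n₂ : ℤ) ^ 2 - b * (i : ℤ) ^ 2) := by
  by_contra hcon
  push_neg at hcon
  have hpp : p.Prime := Fact.out
  have hp2 : p ≠ 2 := by omega
  have hodd : p % 2 = 1 := Nat.odd_iff.mp (hpp.odd_of_ne_two hp2)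
  have hF : ringChar (ZMod p) ≠ 2 := by
    rw [ZMod.ringChar_zmod_n]; exact hp2
  set χ := quadraticChar (ZMod p) with hχdef
  set B : ZMod p := ((b : ℤ) : ZMod p) with hBdef
  have hB : χ B = -1 := hb
  have hBns : ¬ IsSquare B := quadraticChar_neg_one_iff_not_isSquare.mp hB
  have hB0 : B ≠ 0 := by
    intro h
    rw [h, hχdef] at hB
    simp at hB
  set N₁ : ZMod p := (n₁ : ZMod p) with hN₁def
  set N₂ : ZMod p := (n₂ : ZMod p) with hN₂def
  have hN₁0 : N₁ ≠ 0 := by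
    rw [hN₁def, Ne, ZMod.natCast_eq_zero_iff]
    intro hdvd
    have := Nat.le_of_dvd (by omega) hdvd
    omega
  have hN₂0 : N₂ ≠ 0 := by
    rw [hN₂def, Ne, ZMod.natCast_eq_zero_iff]
    intro hdvd
    have := Nat.le_of_dvd (by omega) hdvd
    omega
  -- nonvanishing of N^2 - B x^2 for N ≠ 0
  have hnz : ∀ (N x : ZMod p), N ≠ 0 → N ^ 2 - B * x ^ 2 ≠ 0 := by
    intro N x hN h
    have h' : N ^ 2 = B * x ^ 2 := by linear_combination h
    by_cases hx : x = 0
    · apply hN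
      rw [hx] at h'
      have : N ^ 2 = 0 := by rw [h']; ring
      exact (pow_eq_zero_iff two_ne_zero).mp this
    · apply hBns
      refine ⟨N * x⁻¹, ?_⟩
      have hxx : x * x⁻¹ = 1 := mul_inv_cancel₀ hx
      calc B = B * (x * x⁻¹) * (x * x⁻¹) := by rw [hxx]; ring
        _ = B * x ^ 2 * (x⁻¹ * x⁻¹) := by ring
        _ = N ^ 2 * (x⁻¹ * x⁻¹) := by rw [h']
        _ = N * x⁻¹ * (N * x⁻¹) := by ring
  -- Step 1: the hypothesis extends to all of ZMod p
  have step1 : ∀ x : ZMod p, χ (N₁ ^ 2 - B * x ^ 2) = χ (N₂ ^ 2 - B * x ^ 2) := by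
    intro x
    by_cases hx : x = 0
    · rw [hx, show N₁ ^ 2 - B * (0 : ZMod p) ^ 2 = N₁ ^ 2 from by ring,
        show N₂ ^ 2 - B * (0 : ZMod p) ^ 2 = N₂ ^ 2 from by ring, hχdef,
        quadraticChar_sq_one' hN₁0, quadraticChar_sq_one' hN₂0]
    · have hval : x.val < p := ZMod.val_lt x
      have hval0 : x.val ≠ 0 := fun h => hx ((ZMod.val_eq_zero x).mp h)
      set k := x.val with hk
      set i : ℕ := if k ≤ (p - 1) / 2 then k else p - k with hi
      have hi1 : 1 ≤ i := by rw [hi]; split <;> omega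
      have hi2 : i ≤ (p - 1) / 2 := by rw [hi]; split <;> omega
      have hicast : ((i : ZMod p)) ^ 2 = x ^ 2 := by
        have hxk : ((k : ℕ) : ZMod p) = x := by
          rw [hk, ZMod.natCast_val, ZMod.cast_id]
        rw [hi]
        split
        · rw [hxk]
        · have e : ((p - k : ℕ) : ZMod p) = -x := by
            push_cast [Nat.cast_sub (le_of_lt hval)]
            rw [ZMod.natCast_self, hxk]
            ring
          rw [e]
          ring
      have hh := hcon i hi1 hi2
      simp only [legendreSym] at hh
      push_cast at hh
      rw [hicast] at hh
      exact hh
  -- the full sum equals p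
  set H : ZMod p → ℤ := fun u => χ (N₁ ^ 2 - B * u) * χ (N₂ ^ 2 - B * u) with hHdef
  have hA : ∑ x : ZMod p, H (x ^ 2) = p := by
    have hone : ∀ x : ZMod p, H (x ^ 2) = 1 := by
      intro x
      rw [hHdef]
      simp only
      rw [step1 x, ← pow_two]
      exact quadraticChar_sq_one (hnz N₂ x hN₂0)
    rw [Finset.sum_congr rfl fun x _ => hone x]
    simp [ZMod.card]
  -- fiberwise rewriting
  have hfiber : ∑ x : ZMod p, H (x ^ 2) = ∑ u : ZMod p, (χ u + 1) * H u := by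
    rw [← Finset.sum_fiberwise' univ (fun x : ZMod p => x ^ 2) H]
    refine Finset.sum_congr rfl fun u _ => ?_
    rw [Finset.sum_const, nsmul_eq_mul]
    congr 1
    have hcard := quadraticChar_card_sqrts hF u
    have hset : ({x : ZMod p | x ^ 2 = u} : Set (ZMod p)).toFinset
        = univ.filter (fun x : ZMod p => x ^ 2 = u) := by
      ext y
      simp [Set.mem_toFinset]
    rw [← hset, hcard, hχdef]
  -- N₁² ≠ N₂²
  have hN12 : N₁ ^ 2 ≠ N₂ ^ 2 := by
    intro h
    have hfac : (N₂ - N₁) * (N₂ + N₁) = 0 := by linear_combination -h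
    rcases mul_eq_zero.mp hfac with h' | h'
    · have hz : ((n₂ - n₁ : ℕ) : ZMod p) = 0 := by
        push_cast [Nat.cast_sub (le_of_lt h12)]
        exact h'
      rw [ZMod.natCast_eq_zero_iff] at hz
      have := Nat.le_of_dvd (by omega) hz
      omega
    · have hz : ((n₂ + n₁ : ℕ) : ZMod p) = 0 := by
        push_cast
        exact h'
      rw [ZMod.natCast_eq_zero_iff] at hz
      have := Nat.le_of_dvd (by omega) hz
      omega
  -- the pure sum of H is -1
  have hsumH : ∑ u : ZMod p, H u = -1 := by
    set r : ZMod p := N₁ ^ 2 * B⁻¹ with hrdef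
    set s : ZMod p := N₂ ^ 2 * B⁻¹ with hsdef
    have hrs : r ≠ s := by
      rw [hrdef, hsdef]
      intro h
      apply hN12
      have hBB : B⁻¹ * B = 1 := inv_mul_cancel₀ hB0
      calc N₁ ^ 2 = N₁ ^ 2 * B⁻¹ * B := by rw [mul_assoc, hBB]; ring
        _ = N₂ ^ 2 * B⁻¹ * B := by rw [h]
        _ = N₂ ^ 2 := by rw [mul_assoc, hBB]; ring
    have hHrs : ∀ u : ZMod p, H u = χ (-B) ^ 2 * (χ (u - r) * χ (u - s)) := by
      intro u
      have hBB : B * B⁻¹ = 1 := mul_inv_cancel₀ hB0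
      have e1 : N₁ ^ 2 - B * u = -B * (u - r) := by
        rw [hrdef]
        calc N₁ ^ 2 - B * u = N₁ ^ 2 * (B * B⁻¹) - B * u := by rw [hBB]; ring
          _ = -B * (u - N₁ ^ 2 * B⁻¹) := by ring
      have e2 : N₂ ^ 2 - B * u = -B * (u - s) := by
        rw [hsdef]
        calc N₂ ^ 2 - B * u = N₂ ^ 2 * (B * B⁻¹) - B * u := by rw [hBB]; ring
          _ = -B * (u - N₂ ^ 2 * B⁻¹) := by ring
      rw [hHdef]
      simp only
      rw [e1, e2, map_mul, map_mul]
      ring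
    have hsq : χ (-B) ^ 2 = 1 := quadraticChar_sq_one (neg_ne_zero.mpr hB0)
    calc ∑ u : ZMod p, H u
        = ∑ u : ZMod p, χ (u - r) * χ (u - s) := by
          refine Finset.sum_congr rfl fun u _ => ?_
          rw [hHrs u, hsq, one_mul]
      _ = -1 := by rw [hχdef]; exact aux_quadChar_shift_sum hF hrs
  -- the twisted sum is at most p
  have habs : ∀ z : ZMod p, |χ z| ≤ 1 := by
    intro z
    rw [hχdef]
    rcases quadraticChar_isQuadratic (ZMod p) z with h | h | h <;> rw [h] <;> norm_num
  have hbound : ∑ u : ZMod p, χ u * H u ≤ (p : ℤ) := by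
    calc ∑ u : ZMod p, χ u * H u
        ≤ ∑ _u : ZMod p, (1 : ℤ) := by
          refine Finset.sum_le_sum fun u _ => ?_
          have hle : |χ u * H u| ≤ 1 := by
            rw [hHdef]
            simp only
            rw [abs_mul, abs_mul]
            calc |χ u| * (|χ (N₁ ^ 2 - B * u)| * |χ (N₂ ^ 2 - B * u)|)
                ≤ 1 * (1 * 1) := by
                  gcongr <;> [skip; skip; skip] <;> exact habs _
              _ = 1 := by ring
          linarith [le_abs_self (χ u * H u), abs_le.mp hle]
      _ = (p : ℤ) := by simp [ZMod.card]
  -- contradiction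
  have hfinal : (p : ℤ) = ∑ u : ZMod p, χ u * H u + ∑ u : ZMod p, H u := by
    rw [← hA, hfiber, ← Finset.sum_add_distrib]
    refine Finset.sum_congr rfl fun u _ => ?_
    ring
  rw [hsumH] at hfinal
  omega
end
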